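/- arXiv:math/0609551 — 4 statements merged into one kernel-verified Lean document; each statement's English description precedes it below -/
import Mathlib

section
/- Let A be the preprojective algebra of type A_n^{(1)} over a field k, presented by the quiver with vertices ℤ/(n+1)ℤ, arrows (i|i±1), and relations (i|i+1|i) = (i|i-1|i). Every element of A is a k-linear combination of the elements P(i,l,m) := (i|i+1|i)^m (i|i+1|…|i+l) for l ≥ 0 and P(i,l,m) := (i|i+1|i)^m (i|i-1|…|i+l) for l < 0 (with i ∈ ℤ/(n+1)ℤ, l ∈ ℤ, m ≥ 0). -/
/-! STATEMENT 5: the preprojective algebra of type A_n^{(1)}, presented by the quiver with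
vertices ℤ/(n+1)ℤ, arrows (i|i±1) and relations (i|i+1|i) = (i|i-1|i), is spanned as a
k-vector space by the elements P(i,l,m) = (i|i+1|i)^m (i|i+1|…|i+l) (l ≥ 0) and
P(i,l,m) = (i|i+1|i)^m (i|i-1|…|i+l) (l < 0). -/

/-- Generators of the preprojective algebra: the idempotent (trivial path) `idem i` at vertex
`i`, the arrow `up i = (i|i+1)` and the arrow `down i = (i|i-1)`. -/
inductive PreprojGen (n : ℕ) : Type
  | idem : ZMod (n + 1) → PreprojGen n
  | up : ZMod (n + 1) → PreprojGen n
  | down : ZMod (n + 1) → PreprojGen n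

open FreeAlgebra PreprojGen in
/-- The path-algebra and preprojective relations on the free algebra on the generators. -/
inductive PreprojRel (k : Type*) [CommRing k] (n : ℕ) :
    FreeAlgebra k (PreprojGen n) → FreeAlgebra k (PreprojGen n) → Prop
  | idem_mul (i : ZMod (n + 1)) :
      PreprojRel k n (ι k (idem i) * ι k (idem i)) (ι k (idem i))
  | idem_orth (i j : ZMod (n + 1)) (h : i ≠ j) :
      PreprojRel k n (ι k (idem i) * ι k (idem j)) 0
  | idem_sum : PreprojRel k n (∑ i : ZMod (n + 1), ι k (idem i)) 1
  | up_src (i : ZMod (n + 1)) :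
      PreprojRel k n (ι k (idem i) * ι k (up i)) (ι k (up i))
  | up_tgt (i : ZMod (n + 1)) :
      PreprojRel k n (ι k (up i) * ι k (idem (i + 1))) (ι k (up i))
  | up_src_orth (i j : ZMod (n + 1)) (h : j ≠ i) :
      PreprojRel k n (ι k (idem j) * ι k (up i)) 0
  | up_tgt_orth (i j : ZMod (n + 1)) (h : j ≠ i + 1) :
      PreprojRel k n (ι k (up i) * ι k (idem j)) 0
  | down_src (i : ZMod (n + 1)) :
      PreprojRel k n (ι k (idem i) * ι k (down i)) (ι k (down i))
  | down_tgt (i : ZMod (n + 1)) :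
      PreprojRel k n (ι k (down i) * ι k (idem (i - 1))) (ι k (down i))
  | down_src_orth (i j : ZMod (n + 1)) (h : j ≠ i) :
      PreprojRel k n (ι k (idem j) * ι k (down i)) 0
  | down_tgt_orth (i j : ZMod (n + 1)) (h : j ≠ i - 1) :
      PreprojRel k n (ι k (down i) * ι k (idem j)) 0
  | preproj (i : ZMod (n + 1)) :
      PreprojRel k n (ι k (up i) * ι k (down (i + 1))) (ι k (down i) * ι k (up (i - 1)))

/-- The preprojective algebra of type A_n^{(1)} over k. -/
abbrev PreprojAlg (k : Type*) [CommRing k] (n : ℕ) := RingQuot (PreprojRel k n)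

variable (k : Type*) [Field k] (n : ℕ)

/-- The idempotent (i). -/
noncomputable def eA (i : ZMod (n + 1)) : PreprojAlg k n :=
  RingQuot.mkAlgHom k (PreprojRel k n) (FreeAlgebra.ι k (PreprojGen.idem i))

/-- The arrow (i|i+1). -/
noncomputable def uA (i : ZMod (n + 1)) : PreprojAlg k n :=
  RingQuot.mkAlgHom k (PreprojRel k n) (FreeAlgebra.ι k (PreprojGen.up i))

/-- The arrow (i|i-1). -/
noncomputable def dA (i : ZMod (n + 1)) : PreprojAlg k n :=
  RingQuot.mkAlgHom k (PreprojRel k n) (FreeAlgebra.ι k (PreprojGen.down i))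

/-- The path (i|i+1|…|i+l) (going up `l` steps from `i`); for `l = 0` the trivial path (i). -/
noncomputable def chainUp : ℕ → ZMod (n + 1) → PreprojAlg k n
  | 0, i => eA k n i
  | l + 1, i => uA k n i * chainUp l (i + 1)

/-- The path (i|i-1|…|i-l) (going down `l` steps from `i`); for `l = 0` the trivial path. -/
noncomputable def chainDown : ℕ → ZMod (n + 1) → PreprojAlg k n
  | 0, i => eA k n i
  | l + 1, i => dA k n i * chainDown l (i - 1)

/-- The normal-form element P(i,l,m) = (i|i+1|i)^m (i|i±1|…|i+l). -/
noncomputable def Pel (i : ZMod (n + 1)) (l : ℤ) (m : ℕ) : PreprojAlg k n :=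
  (uA k n i * dA k n (i + 1)) ^ m *
    (if 0 ≤ l then chainUp k n l.toNat i else chainDown k n (-l).toNat i)

/-! The span of the P(i,l,m) contains 1 = ∑ (i) and is stable under right multiplication by the
generators (j), (j|j+1), (j|j-1). Appending an arrow to the path (i|i±1|…|i+l) either extends it
or makes it turn back; in the latter case the preprojective relation slides the resulting 2-cycle
to the start of the path, giving (i|i+1|i) times a shorter path. Since the generators generate the
algebra, this span is everything. -/

theorem Submodule.span_eq_top_of_one_mem_of_mul_mem {R A : Type*} [CommSemiring R] [Semiring A]
    [Algebra R A] {s t : Set A} (ht : Algebra.adjoin R t = ⊤) (h1 : (1 : A) ∈ span R s)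
    (hmul : ∀ x ∈ s, ∀ y ∈ t, x * y ∈ span R s) : span R s = ⊤ := by
  have mul_gen : ∀ y ∈ t, ∀ x ∈ span R s, x * y ∈ span R s := fun y hy =>
    span_le (p := (span R s).comap (LinearMap.mulRight R y)).mpr fun x hx => hmul x hx y hy
  rw [eq_top_iff]
  rintro a -
  have ha : a ∈ Algebra.adjoin R t := ht ▸ Algebra.mem_top
  suffices ∀ x ∈ span R s, x * a ∈ span R s by simpa using this 1 h1
  induction ha using Algebra.adjoin_induction with
  | mem y hy => exact mul_gen y hy
  | algebraMap r =>
    intro x hx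
    rw [← Algebra.commutes, ← Algebra.smul_def]
    exact smul_mem _ r hx
  | add a b _ _ iha ihb => exact fun x hx => mul_add x a b ▸ add_mem (iha x hx) (ihb x hx)
  | mul a b _ _ iha ihb => exact fun x hx => mul_assoc x a b ▸ ihb _ (iha x hx)

def PreprojGen.source {n : ℕ} : PreprojGen n → ZMod (n + 1)
  | idem i | up i | down i => i

namespace PreprojAlg

noncomputable def gen (g : PreprojGen n) : PreprojAlg k n :=
  RingQuot.mkAlgHom k (PreprojRel k n) (FreeAlgebra.ι k g)

noncomputable def loop (i : ZMod (n + 1)) : PreprojAlg k n :=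
  uA k n i * dA k n (i + 1)

noncomputable def walk (i : ZMod (n + 1)) (l : ℤ) : PreprojAlg k n :=
  if 0 ≤ l then chainUp k n l.toNat i else chainDown k n (-l).toNat i

theorem adjoin_range_gen : Algebra.adjoin k (Set.range (gen k n)) = ⊤ := by
  change Algebra.adjoin k
    (Set.range (RingQuot.mkAlgHom k (PreprojRel k n) ∘ FreeAlgebra.ι k)) = ⊤
  rw [Set.range_comp, Algebra.adjoin_image, FreeAlgebra.adjoin_range_ι, Algebra.map_top,
    AlgHom.range_eq_top]
  exact RingQuot.mkAlgHom_surjective k (PreprojRel k n)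

variable {k n}

local notation "e" => eA k n
local notation "u" => uA k n
local notation "d" => dA k n
local notation "cu" => chainUp k n
local notation "cd" => chainDown k n

open PreprojGen

@[simp] theorem gen_idem (i : ZMod (n + 1)) : gen k n (idem i) = e i := rfl
@[simp] theorem gen_up (i : ZMod (n + 1)) : gen k n (up i) = u i := rfl
@[simp] theorem gen_down (i : ZMod (n + 1)) : gen k n (down i) = d i := rfl

theorem eA_mul_eA (i : ZMod (n + 1)) : e i * e i = e i := by
  simpa [eA] using RingQuot.mkAlgHom_rel k (PreprojRel.idem_mul (k := k) i)

theorem eA_mul_eA_of_ne {i j : ZMod (n + 1)} (h : i ≠ j) : e i * e j = 0 := by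
  simpa [eA] using RingQuot.mkAlgHom_rel k (PreprojRel.idem_orth (k := k) i j h)

theorem sum_eA : ∑ i : ZMod (n + 1), e i = 1 := by
  simpa [eA] using RingQuot.mkAlgHom_rel k (PreprojRel.idem_sum (k := k) (n := n))

theorem eA_mul_uA (i : ZMod (n + 1)) : e i * u i = u i := by
  simpa [eA, uA] using RingQuot.mkAlgHom_rel k (PreprojRel.up_src (k := k) i)

theorem uA_mul_eA (i : ZMod (n + 1)) : u i * e (i + 1) = u i := by
  simpa [eA, uA] using RingQuot.mkAlgHom_rel k (PreprojRel.up_tgt (k := k) i)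

theorem eA_mul_dA (i : ZMod (n + 1)) : e i * d i = d i := by
  simpa [eA, dA] using RingQuot.mkAlgHom_rel k (PreprojRel.down_src (k := k) i)

theorem dA_mul_eA (i : ZMod (n + 1)) : d i * e (i - 1) = d i := by
  simpa [eA, dA] using RingQuot.mkAlgHom_rel k (PreprojRel.down_tgt (k := k) i)

theorem dA_mul_uA (i : ZMod (n + 1)) : d i * u (i - 1) = loop k n i := by
  simpa [loop, uA, dA] using (RingQuot.mkAlgHom_rel k (PreprojRel.preproj (k := k) i)).symm

theorem eA_source_mul_gen (g : PreprojGen n) : e g.source * gen k n g = gen k n g := by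
  cases g with
  | idem i => exact eA_mul_eA i
  | up i => exact eA_mul_uA i
  | down i => exact eA_mul_dA i

theorem loop_mul_eA (i : ZMod (n + 1)) : loop k n i * e i = loop k n i := by
  have h : d (i + 1) * e i = d (i + 1) := by simpa using dA_mul_eA (k := k) (n := n) (i + 1)
  rw [loop, mul_assoc, h]

theorem loop_succ (i : ZMod (n + 1)) : loop k n (i + 1) = d (i + 1) * u i := by
  simpa using (dA_mul_uA (k := k) (n := n) (i + 1)).symm

theorem loop_sub_one (i : ZMod (n + 1)) : loop k n (i - 1) = u (i - 1) * d i := by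
  simp [loop]

theorem chainUp_mul_eA_self (t : ℕ) (i : ZMod (n + 1)) : cu t i * e (i + t) = cu t i := by
  induction t generalizing i with
  | zero => simpa [chainUp] using eA_mul_eA i
  | succ t ih =>
    rw [chainUp, show i + ↑(t + 1) = i + 1 + t by push_cast; ring, mul_assoc, ih]

theorem chainUp_mul_eA_of_ne (t : ℕ) {i j : ZMod (n + 1)} (h : j ≠ i + t) :
    cu t i * e j = 0 := by
  induction t generalizing i with
  | zero => simpa [chainUp] using eA_mul_eA_of_ne (k := k) (Ne.symm (by simpa using h))
  | succ t ih =>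
    rw [chainUp, mul_assoc, ih fun hj => h (hj.trans (by push_cast; ring)), mul_zero]

theorem chainDown_mul_eA_self (t : ℕ) (i : ZMod (n + 1)) : cd t i * e (i - t) = cd t i := by
  induction t generalizing i with
  | zero => simpa [chainDown] using eA_mul_eA i
  | succ t ih =>
    rw [chainDown, show i - ↑(t + 1) = i - 1 - t by push_cast; ring, mul_assoc, ih]

theorem chainDown_mul_eA_of_ne (t : ℕ) {i j : ZMod (n + 1)} (h : j ≠ i - t) :
    cd t i * e j = 0 := by
  induction t generalizing i with
  | zero => simpa [chainDown] using eA_mul_eA_of_ne (k := k) (Ne.symm (by simpa using h))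
  | succ t ih =>
    rw [chainDown, mul_assoc, ih fun hj => h (hj.trans (by push_cast; ring)), mul_zero]

theorem chainUp_mul_uA (t : ℕ) (i : ZMod (n + 1)) : cu t i * u (i + t) = cu (t + 1) i := by
  induction t generalizing i with
  | zero => simp [chainUp, eA_mul_uA, uA_mul_eA]
  | succ t ih =>
    rw [chainUp, show i + ↑(t + 1) = i + 1 + t by push_cast; ring, mul_assoc, ih]
    rfl

theorem chainDown_mul_dA (t : ℕ) (i : ZMod (n + 1)) : cd t i * d (i - t) = cd (t + 1) i := by
  induction t generalizing i with
  | zero => simp [chainDown, eA_mul_dA, dA_mul_eA]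
  | succ t ih =>
    rw [chainDown, show i - ↑(t + 1) = i - 1 - t by push_cast; ring, mul_assoc, ih]
    rfl

theorem chainUp_succ_mul_dA (t : ℕ) (i : ZMod (n + 1)) :
    cu (t + 1) i * d (i + ↑(t + 1)) = loop k n i * cu t i := by
  induction t generalizing i with
  | zero =>
    rw [chainUp, chainUp, chainUp, loop_mul_eA, uA_mul_eA]
    simp [loop]
  | succ t ih =>
    rw [chainUp, show i + ↑(t + 1 + 1) = i + 1 + ↑(t + 1) by push_cast; ring, mul_assoc, ih,
      loop_succ, loop]
    simp only [chainUp, mul_assoc]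

theorem chainDown_succ_mul_uA (t : ℕ) (i : ZMod (n + 1)) :
    cd (t + 1) i * u (i - ↑(t + 1)) = loop k n i * cd t i := by
  induction t generalizing i with
  | zero => simp [chainDown, dA_mul_eA, dA_mul_uA, loop_mul_eA]
  | succ t ih =>
    rw [chainDown, show i - ↑(t + 1 + 1) = i - 1 - ↑(t + 1) by push_cast; ring, mul_assoc, ih,
      loop_sub_one, ← dA_mul_uA]
    simp only [chainDown, mul_assoc]

theorem Pel_eq_loop_pow_mul_walk (i : ZMod (n + 1)) (l : ℤ) (m : ℕ) :
    Pel k n i l m = loop k n i ^ m * walk k n i l := rfl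

@[simp] theorem walk_natCast (i : ZMod (n + 1)) (t : ℕ) : walk k n i t = cu t i := by
  simp [walk]

@[simp] theorem walk_neg_natCast (i : ZMod (n + 1)) (t : ℕ) : walk k n i (-t) = cd t i := by
  cases t with
  | zero => simp [walk, chainUp, chainDown]
  | succ t => simp [walk]; omega

theorem chainUp_mul_gen (t : ℕ) (i : ZMod (n + 1)) (g : PreprojGen n) :
    cu t i * gen k n g = 0 ∨
      ∃ (m : ℕ) (l : ℤ), cu t i * gen k n g = loop k n i ^ m * walk k n i l := by
  by_cases hg : g.source = i + t
  · right
    cases g with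
    | idem j =>
      obtain rfl : j = i + t := hg
      exact ⟨0, t, by rw [pow_zero, one_mul, walk_natCast, gen_idem, chainUp_mul_eA_self]⟩
    | up j =>
      obtain rfl : j = i + t := hg
      exact ⟨0, (t + 1 : ℕ), by rw [pow_zero, one_mul, walk_natCast, gen_up, chainUp_mul_uA]⟩
    | down j =>
      obtain rfl : j = i + t := hg
      cases t with
      | zero =>
        refine ⟨0, -(1 : ℕ), ?_⟩
        rw [pow_zero, one_mul, walk_neg_natCast, gen_down, ← chainDown_mul_dA]
        simp [chainUp, chainDown]
      | succ t => exact ⟨1, t, by rw [pow_one, walk_natCast, gen_down, chainUp_succ_mul_dA]⟩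
  · left
    rw [← eA_source_mul_gen, ← mul_assoc, chainUp_mul_eA_of_ne t hg, zero_mul]

theorem chainDown_mul_gen (t : ℕ) (i : ZMod (n + 1)) (g : PreprojGen n) :
    cd t i * gen k n g = 0 ∨
      ∃ (m : ℕ) (l : ℤ), cd t i * gen k n g = loop k n i ^ m * walk k n i l := by
  by_cases hg : g.source = i - t
  · right
    cases g with
    | idem j =>
      obtain rfl : j = i - t := hg
      exact ⟨0, -t,
        by rw [pow_zero, one_mul, walk_neg_natCast, gen_idem, chainDown_mul_eA_self]⟩
    | down j =>
      obtain rfl : j = i - t := hg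
      exact ⟨0, -(t + 1 : ℕ),
        by rw [pow_zero, one_mul, walk_neg_natCast, gen_down, chainDown_mul_dA]⟩
    | up j =>
      obtain rfl : j = i - t := hg
      cases t with
      | zero =>
        refine ⟨0, (1 : ℕ), ?_⟩
        rw [pow_zero, one_mul, walk_natCast, gen_up, ← chainUp_mul_uA]
        simp [chainUp, chainDown]
      | succ t =>
        exact ⟨1, -t, by rw [pow_one, walk_neg_natCast, gen_up, chainDown_succ_mul_uA]⟩
  · left
    rw [← eA_source_mul_gen, ← mul_assoc, chainDown_mul_eA_of_ne t hg, zero_mul]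

theorem walk_mul_gen (i : ZMod (n + 1)) (l : ℤ) (g : PreprojGen n) :
    walk k n i l * gen k n g = 0 ∨
      ∃ (m : ℕ) (l' : ℤ), walk k n i l * gen k n g = loop k n i ^ m * walk k n i l' := by
  obtain ⟨t, rfl | rfl⟩ := l.eq_nat_or_neg
  · rw [walk_natCast]
    exact chainUp_mul_gen t i g
  · rw [walk_neg_natCast]
    exact chainDown_mul_gen t i g

theorem Pel_zero_zero (i : ZMod (n + 1)) : Pel k n i 0 0 = e i := by
  simp [Pel, chainUp]

end PreprojAlg

/-- every element of the preprojective algebra of type A_n^{(1)} is a k-linear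
combination of the elements P(i,l,m). -/
theorem stmt5 :
    Submodule.span k {x : PreprojAlg k n | ∃ (i : ZMod (n + 1)) (l : ℤ) (m : ℕ),
      x = Pel k n i l m} = ⊤ := by
  refine Submodule.span_eq_top_of_one_mem_of_mul_mem (PreprojAlg.adjoin_range_gen k n) ?_ ?_
  · rw [← PreprojAlg.sum_eA]
    exact Submodule.sum_mem _ fun i _ =>
      Submodule.subset_span ⟨i, 0, 0, (PreprojAlg.Pel_zero_zero i).symm⟩
  · rintro _ ⟨i, l, m, rfl⟩ _ ⟨g, rfl⟩
    rw [PreprojAlg.Pel_eq_loop_pow_mul_walk, mul_assoc]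
    rcases PreprojAlg.walk_mul_gen (k := k) i l g with h | ⟨m', l', h⟩
    · rw [h, mul_zero]
      exact Submodule.zero_mem _
    · rw [h, ← mul_assoc, ← pow_add, ← PreprojAlg.Pel_eq_loop_pow_mul_walk]
      exact Submodule.subset_span ⟨i, l', m + m', rfl⟩
end

section
/- Let 𝒪 = k[x,y,z]/(xy + z^{n+1}) and I_r = (y, z^r)𝒪 for 0 ≤ r ≤ n. Then the monomials x^q z^{m+r} (q ≥ 0, m ≥ 0) and y^q z^m (q > 0, m ≥ 0) form a k-linear basis of I_r. -/
/-!
Sending `x ↦ s`, `y ↦ -s⁻¹tⁿ⁺¹`, `z ↦ t` maps `𝒪` to `k[s, s⁻¹, t]` and the proposed basis, up to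
sign, to pairwise distinct monomials: `x^q z^{m+r} ↦ s^q t^{m+r}` has `s`-exponent `q ≥ 0`, while
`y^q z^m` has `s`-exponent `-q < 0`. This gives linear independence. For spanning, `I_r` is
spanned by the monomials `x^a y^b z^c` with `b > 0` or `c ≥ r`, and `xy = -z^{n+1}` lowers `a` and
`b` together until one of them vanishes; `c` only grows, and when `b` reaches `0` first we still
have `c ≥ n + 1 ≥ r`.
-/

open MvPolynomial

/-- The coordinate ring 𝒪 = k[x,y,z]/(xy + z^{n+1}) of the A_n rational double point. -/
abbrev AnRing (k : Type*) [Field k] (n : ℕ) :=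
  MvPolynomial (Fin 3) k ⧸
    Ideal.span {(X 0 * X 1 + X 2 ^ (n + 1) : MvPolynomial (Fin 3) k)}

theorem AddMonoidAlgebra.linearIndependent_single_units {R G ι : Type*} [Ring R] [AddMonoid G]
    {e : ι → G} (he : Function.Injective e) (c : ι → Rˣ) :
    LinearIndependent R fun i => single (e i) (c i : R) := by
  convert ((basis G R).linearIndependent.comp e he).units_smul c with i
  simp [Units.smul_def]

noncomputable section

namespace AnRing

open AddMonoidAlgebra Submodule Set

variable {k : Type*} [Field k] {n : ℕ}

def x : AnRing k n := Ideal.Quotient.mk _ (X 0)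
def y : AnRing k n := Ideal.Quotient.mk _ (X 1)
def z : AnRing k n := Ideal.Quotient.mk _ (X 2)

theorem x_mul_y : (x * y : AnRing k n) = -z ^ (n + 1) := by
  rw [eq_neg_iff_add_eq_zero, x, y, z, ← map_mul, ← map_pow, ← map_add,
    Ideal.Quotient.eq_zero_iff_mem]
  exact Ideal.subset_span rfl

variable (k n) in
def idealMonomial (r : ℕ) : (ℕ × ℕ) ⊕ (ℕ × ℕ) → AnRing k n :=
  Sum.elim (fun qm => x ^ qm.1 * z ^ (qm.2 + r)) fun qm => y ^ (qm.1 + 1) * z ^ qm.2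

section LinearIndependent

variable (k n) in
/-- `x ↦ s`, `y ↦ -s⁻¹tⁿ⁺¹`, `z ↦ t`, with `s^a t^b` written as `single (a, b) 1`. -/
def toMonoidAlgebra : AnRing k n →ₐ[k] AddMonoidAlgebra k (ℤ × ℕ) :=
  Ideal.Quotient.liftₐ _ (aeval ![single (1, 0) 1, single (-1, n + 1) (-1), single (0, 1) 1])
    fun p hp => by
      obtain ⟨c, rfl⟩ := Ideal.mem_span_singleton'.mp hp
      simp [single_pow, single_mul_single]

theorem toMonoidAlgebra_x : toMonoidAlgebra k n x = single (1, 0) 1 :=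
  aeval_X _ 0

theorem toMonoidAlgebra_y : toMonoidAlgebra k n y = single (-1, n + 1) (-1) :=
  aeval_X _ 1

theorem toMonoidAlgebra_z : toMonoidAlgebra k n z = single (0, 1) 1 :=
  aeval_X _ 2

variable (n) in
def idealExponent (r : ℕ) : (ℕ × ℕ) ⊕ (ℕ × ℕ) → ℤ × ℕ :=
  Sum.elim (fun qm => (qm.1, qm.2 + r))
    fun qm => (-(qm.1 + 1 : ℤ), (n + 1) * (qm.1 + 1) + qm.2)

variable (k) in
def idealSign : (ℕ × ℕ) ⊕ (ℕ × ℕ) → kˣ :=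
  Sum.elim 1 fun qm => (-1) ^ (qm.1 + 1)

theorem idealExponent_injective (r : ℕ) : Function.Injective (idealExponent n r) := by
  rintro (⟨q, m⟩ | ⟨q, m⟩) (⟨q', m'⟩ | ⟨q', m'⟩) h <;>
    simp only [idealExponent, Sum.elim_inl, Sum.elim_inr, Prod.mk.injEq] at h
  · simp only [Sum.inl.injEq, Prod.mk.injEq]; omega
  · omega
  · omega
  · obtain ⟨hq, hm⟩ := h
    obtain rfl : q = q' := by omega
    simp only [Sum.inr.injEq, Prod.mk.injEq, true_and]
    exact Nat.add_left_cancel hm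

theorem toMonoidAlgebra_idealMonomial (r : ℕ) (i : (ℕ × ℕ) ⊕ (ℕ × ℕ)) :
    toMonoidAlgebra k n (idealMonomial k n r i) =
      single (idealExponent n r i) (idealSign k i : k) := by
  rcases i with ⟨q, m⟩ | ⟨q, m⟩ <;>
    simp only [idealMonomial, idealExponent, idealSign, Sum.elim_inl, Sum.elim_inr, map_mul,
      map_pow, toMonoidAlgebra_x, toMonoidAlgebra_y, toMonoidAlgebra_z, single_pow,
      single_mul_single]
  · simp
  · congr 1
    · ext <;> simp [mul_comm]
    · simp

theorem linearIndependent_idealMonomial (r : ℕ) :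
    LinearIndependent k (idealMonomial k n r) := by
  refine .of_comp (toMonoidAlgebra k n).toLinearMap ?_
  have h := linearIndependent_single_units (R := k) (idealExponent_injective (n := n) r)
    (idealSign k)
  rw [← funext (toMonoidAlgebra_idealMonomial r)] at h
  exact h

end LinearIndependent

section Span

theorem mk_monomial (u : Fin 3 →₀ ℕ) (c : k) :
    (Ideal.Quotient.mk _ (monomial u c) : AnRing k n) = c • (x ^ u 0 * y ^ u 1 * z ^ u 2) := by
  rw [monomial_eq, Finsupp.prod_fintype _ _ fun i => pow_zero _, Fin.prod_univ_three,
    ← smul_eq_C_mul, ← Ideal.Quotient.mkₐ_eq_mk k, map_smul]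
  simp [x, y, z]

theorem mul_mem_of_forall_monomial_mul_mem {S : Submodule k (AnRing k n)} {w : AnRing k n}
    (h : ∀ a b c : ℕ, x ^ a * y ^ b * z ^ c * w ∈ S) (v : AnRing k n) : v * w ∈ S := by
  obtain ⟨p, rfl⟩ := Ideal.Quotient.mk_surjective v
  induction p using MvPolynomial.induction_on' with
  | monomial u c => rw [mk_monomial, smul_mul_assoc]; exact S.smul_mem c (h ..)
  | add p q hp hq => rw [map_add, add_mul]; exact S.add_mem hp hq

theorem x_pow_mul_y_pow_mul_z_pow_mem_span {r : ℕ} (hr : r ≤ n + 1) :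
    ∀ a b c : ℕ, (b ≠ 0 ∨ r ≤ c) →
      x ^ a * y ^ b * z ^ c ∈ span k (range (idealMonomial k n r))
  | a, 0, c, h => subset_span ⟨.inl (a, c - r), by
      simp [idealMonomial, Nat.sub_add_cancel (h.resolve_left (not_not.mpr rfl))]⟩
  | 0, b + 1, c, _ => subset_span ⟨.inr (b, c), by simp [idealMonomial]⟩
  | a + 1, b + 1, c, _ => by
    have hxy : (x ^ (a + 1) * y ^ (b + 1) * z ^ c : AnRing k n) =
        -(x ^ a * y ^ b * z ^ (c + (n + 1))) := by
      linear_combination (x ^ a * y ^ b * z ^ c) * x_mul_y (k := k) (n := n)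
    rw [hxy]
    exact neg_mem (x_pow_mul_y_pow_mul_z_pow_mem_span hr a b _ (.inr (by omega)))

theorem span_idealMonomial {r : ℕ} (hr : r ≤ n + 1) :
    span k (range (idealMonomial k n r)) =
      (Ideal.span {y, z ^ r} : Ideal (AnRing k n)).restrictScalars k := by
  refine le_antisymm (span_le.mpr ?_) fun v hv => ?_
  · rintro _ ⟨⟨q, m⟩ | ⟨q, m⟩, rfl⟩
    · exact Ideal.mem_span_pair.mpr ⟨0, x ^ q * z ^ m, by simp [idealMonomial]; ring⟩
    · exact Ideal.mem_span_pair.mpr ⟨y ^ q * z ^ m, 0, by simp [idealMonomial]; ring⟩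
  · obtain ⟨a, b, rfl⟩ := Ideal.mem_span_pair.mp ((restrictScalars_mem k _ v).mp hv)
    refine add_mem (mul_mem_of_forall_monomial_mul_mem (fun i j l => ?_) a)
      (mul_mem_of_forall_monomial_mul_mem (fun i j l => ?_) b)
    · rw [show x ^ i * y ^ j * z ^ l * y = x ^ i * y ^ (j + 1) * z ^ l by ring]
      exact x_pow_mul_y_pow_mul_z_pow_mem_span hr i (j + 1) l (.inl j.succ_ne_zero)
    · rw [mul_assoc, ← pow_add]
      exact x_pow_mul_y_pow_mul_z_pow_mem_span hr i j (l + r) (.inr (by omega))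

end Span

end AnRing

end

theorem stmt7_general (k : Type*) [Field k] (n : ℕ) (r : ℕ) (hr : r ≤ n) :
    let O := AnRing k n
    let x : O := Ideal.Quotient.mk _ (X 0)
    let y : O := Ideal.Quotient.mk _ (X 1)
    let z : O := Ideal.Quotient.mk _ (X 2)
    let f : (ℕ × ℕ) ⊕ (ℕ × ℕ) → O :=
      Sum.elim (fun qm => x ^ qm.1 * z ^ (qm.2 + r)) (fun qm => y ^ (qm.1 + 1) * z ^ qm.2)
    LinearIndependent k f ∧
      Submodule.span k (Set.range f) =
        (Ideal.span {y, z ^ r} : Ideal O).restrictScalars k :=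
  ⟨AnRing.linearIndependent_idealMonomial r, AnRing.span_idealMonomial (by omega)⟩

set_option maxHeartbeats 1000000 in
set_option synthInstance.maxHeartbeats 1000000 in
theorem stmt7 (k : Type*) [Field k] (n : ℕ) (hn : 1 ≤ n) (r : ℕ) (hr : r ≤ n) :
    let O := AnRing k n
    let x : O := Ideal.Quotient.mk _ (X 0)
    let y : O := Ideal.Quotient.mk _ (X 1)
    let z : O := Ideal.Quotient.mk _ (X 2)
    let f : (ℕ × ℕ) ⊕ (ℕ × ℕ) → O :=
      Sum.elim (fun qm => x ^ qm.1 * z ^ (qm.2 + r)) (fun qm => y ^ (qm.1 + 1) * z ^ qm.2)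
    LinearIndependent k f ∧
      Submodule.span k (Set.range f) =
        (Ideal.span {y, z ^ r} : Ideal O).restrictScalars k :=
  stmt7_general k n r hr
end

section
/- Let G be the group ℤ/(n+1)ℤ acting on the polynomial ring k[x,y] by the generator sending x ↦ ζx, y ↦ ζ^n y, where ζ ∈ k is a primitive (n+1)-th root of unity. Then the invariant ring k[x,y]^G is generated by u = x^{n+1}, v = y^{n+1}, w = xy, and is isomorphic to k[u,v,w]/(uv − w^{n+1}). -/
/-!
The diagonal matrix `diag(a, b)` scales `x^i y^j` by `a^i b^j`, so over a domain a polynomial is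
invariant iff each of its monomials is. For `(a, b) = (ζ, ζ^n) = (ζ, ζ⁻¹)` these are the
`x^i y^j` with `i ≡ j [MOD n + 1]`, which are `u^q w^j` or `v^q w^i` for `u = x^(n+1)`,
`v = y^(n+1)`, `w = xy`.

The relation `uv = w^(n+1)` rewrites each monomial `u^a v^b w^c` into one of these normal forms
with the same image in `k[x,y]`. Sending an invariant monomial back to its normal form is a
`k`-linear left inverse of `k[u,v,w]/(uv - w^(n+1)) → k[x,y]`, which is therefore injective.
-/

open MvPolynomial

noncomputable section

section PowMulPow

variable {R A : Type*} [CommSemiring R] [CommSemiring A] [Algebra R A]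

theorem pow_mul_pow_mem_adjoin_of_modEq (s t : A) {m a b : ℕ} (h : a ≡ b [MOD m]) :
    s ^ a * t ^ b ∈ Algebra.adjoin R {s ^ m, t ^ m, s * t} := by
  wlog hba : b ≤ a generalizing s t a b
  · have := this t s h.symm (by omega)
    rwa [mul_comm (t ^ b), mul_comm t s, Set.insert_comm] at this
  obtain ⟨q, hq⟩ := (Nat.modEq_iff_dvd' hba).mp h.symm
  have hst : s ^ a * t ^ b = (s ^ m) ^ q * (s * t) ^ b := by
    rw [← pow_mul, ← hq, mul_pow, ← mul_assoc, ← pow_add, Nat.sub_add_cancel hba]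
  rw [hst]
  exact mul_mem (pow_mem (Algebra.subset_adjoin (by simp)) q)
    (pow_mem (Algebra.subset_adjoin (by simp)) b)

end PowMulPow

section DiagonalAction

variable {k : Type*} [CommRing k]

def diagAction (a b : k) : MvPolynomial (Fin 2) k →ₐ[k] MvPolynomial (Fin 2) k :=
  aeval fun i : Fin 2 => if i = 0 then C a * X 0 else C b * X 1

@[simp]
theorem diagAction_X_zero (a b : k) : diagAction a b (X 0) = C a * X 0 := by
  simp [diagAction]

@[simp]
theorem diagAction_X_one (a b : k) : diagAction a b (X 1) = C b * X 1 := by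
  simp [diagAction]

theorem diagAction_monomial (a b : k) (d : Fin 2 →₀ ℕ) (c : k) :
    diagAction a b (monomial d c) = monomial d (a ^ d 0 * b ^ d 1 * c) := by
  rw [diagAction, aeval_monomial, monomial_eq]
  simp only [Finsupp.prod_pow, Fin.prod_univ_two, algebraMap_eq, ↓reduceIte, Fin.isValue, mul_pow,
    one_ne_zero, C_mul, C_pow]
  ring

theorem coeff_diagAction (a b : k) (d : Fin 2 →₀ ℕ) (p : MvPolynomial (Fin 2) k) :
    coeff d (diagAction a b p) = a ^ d 0 * b ^ d 1 * coeff d p := by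
  induction p using MvPolynomial.induction_on' with
  | monomial e c =>
    rw [diagAction_monomial, coeff_monomial, coeff_monomial]
    split_ifs with h
    · rw [h]
    · rw [mul_zero]
  | add p q hp hq => rw [map_add, coeff_add, coeff_add, hp, hq, mul_add]

theorem mem_equalizer_diagAction_iff [IsDomain k] {a b : k} {p : MvPolynomial (Fin 2) k} :
    p ∈ AlgHom.equalizer (diagAction a b) (AlgHom.id k _) ↔
      ∀ d ∈ p.support, a ^ d 0 * b ^ d 1 = 1 := by
  simp only [AlgHom.mem_equalizer, AlgHom.id_apply, MvPolynomial.ext_iff, coeff_diagAction,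
    mem_support_iff]
  refine forall_congr' fun d => ⟨fun h hd => (mul_eq_right₀ hd).mp h, fun h => ?_⟩
  by_cases hd : coeff d p = 0
  · rw [hd, mul_zero]
  · rw [h hd, one_mul]

variable {n : ℕ}

theorem equalizer_diagAction_eq_adjoin [IsDomain k] {ζ : k} (hζ : IsPrimitiveRoot ζ (n + 1)) :
    AlgHom.equalizer (diagAction ζ (ζ ^ n)) (AlgHom.id k _) =
      Algebra.adjoin k {(X 0 ^ (n + 1) : MvPolynomial (Fin 2) k), X 1 ^ (n + 1), X 0 * X 1} := by
  apply le_antisymm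
  · intro p hp
    rw [p.as_sum]
    refine Subalgebra.sum_mem _ fun d hd => ?_
    have hmod : d 0 ≡ d 1 [MOD n + 1] := by
      have h := mem_equalizer_diagAction_iff.mp hp d hd
      rw [← pow_mul, ← pow_add, hζ.pow_eq_one_iff_dvd] at h
      refine Nat.ModEq.add_right_cancel' (n * d 1) ?_
      rw [Nat.add_comm (d 1), ← Nat.succ_mul]
      exact (Nat.modEq_zero_iff_dvd.mpr h).trans
        (Nat.modEq_zero_iff_dvd.mpr (dvd_mul_right _ _)).symm
    rw [monomial_eq, Finsupp.prod_pow, Fin.prod_univ_two, ← smul_eq_C_mul]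
    exact Subalgebra.smul_mem _ (pow_mul_pow_mem_adjoin_of_modEq _ _ hmod) _
  · have hu : ζ ^ (n + 1) = 1 := hζ.pow_eq_one
    have hv : (ζ ^ n) ^ (n + 1) = 1 := by rw [pow_right_comm, hu, one_pow]
    have hw : ζ * ζ ^ n = 1 := by rw [← pow_succ', hu]
    rw [Algebra.adjoin_le_iff, Set.insert_subset_iff, Set.insert_subset_iff,
      Set.singleton_subset_iff]
    refine ⟨?_, ?_, ?_⟩ <;> simp only [SetLike.mem_coe, AlgHom.mem_equalizer, AlgHom.id_apply]
    · rw [map_pow, diagAction_X_zero, mul_pow, ← C_pow, hu, C_1, one_mul]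
    · rw [map_pow, diagAction_X_one, mul_pow, ← C_pow, hv, C_1, one_mul]
    · rw [map_mul, diagAction_X_zero, diagAction_X_one, mul_mul_mul_comm, ← C_mul, hw, C_1,
        one_mul]

end DiagonalAction

section Presentation

variable (k : Type*) [CommRing k] (n : ℕ)

def uvwHom : MvPolynomial (Fin 3) k →ₐ[k] MvPolynomial (Fin 2) k :=
  aeval ![X 0 ^ (n + 1), X 1 ^ (n + 1), X 0 * X 1]

def uvwIdeal : Ideal (MvPolynomial (Fin 3) k) :=
  Ideal.span {X 0 * X 1 - X 2 ^ (n + 1)}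

abbrev UVWQuotient := MvPolynomial (Fin 3) k ⧸ uvwIdeal k n

/-- The normal form `u^a w^j` (if `j ≤ i`) or `v^b w^i` of the monomial in `u, v, w` mapping to
`x^i y^j`; it is only meaningful when `i ≡ j [MOD n + 1]`. -/
def uvwNormalForm (i j : ℕ) : UVWQuotient k n :=
  Ideal.Quotient.mk _ <|
    if j ≤ i then X 0 ^ ((i - j) / (n + 1)) * X 2 ^ j else X 1 ^ ((j - i) / (n + 1)) * X 2 ^ i

def toUVWQuotient : MvPolynomial (Fin 2) k →ₗ[k] UVWQuotient k n :=
  (basisMonomials (Fin 2) k).constr k fun d => uvwNormalForm k n (d 0) (d 1)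

variable {k n}

theorem toUVWQuotient_C_mul_X_pow_mul_X_pow (c : k) (i j : ℕ) :
    toUVWQuotient k n (C c * X 0 ^ i * X 1 ^ j) = c • uvwNormalForm k n i j := by
  have h : (C c * X 0 ^ i * X 1 ^ j : MvPolynomial (Fin 2) k) =
      c • basisMonomials (Fin 2) k (Finsupp.single 0 i + Finsupp.single 1 j) := by
    rw [coe_basisMonomials, smul_monomial, smul_eq_mul, mul_one, monomial_eq, Finsupp.prod_add_index
      (by simp) (by simp [pow_add]), Finsupp.prod_single_index (by simp),
      Finsupp.prod_single_index (by simp), mul_assoc]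
  rw [h, map_smul, toUVWQuotient, Module.Basis.constr_basis]
  simp

theorem uvwHom_monomial (e : Fin 3 →₀ ℕ) (c : k) :
    uvwHom k n (monomial e c) =
      C c * X 0 ^ ((n + 1) * e 0 + e 2) * X 1 ^ ((n + 1) * e 1 + e 2) := by
  simp only [uvwHom, aeval_monomial, Finsupp.prod_pow, Fin.prod_univ_three, algebraMap_eq,
    Matrix.cons_val_zero, Matrix.cons_val_one, Matrix.cons_val_two, Matrix.head_cons,
    Matrix.tail_cons]
  ring

theorem uvwNormalForm_add_mul_left (a j : ℕ) :
    uvwNormalForm k n (j + (n + 1) * a) j = Ideal.Quotient.mk _ (X 0 ^ a * X 2 ^ j) := by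
  rw [uvwNormalForm, if_pos (Nat.le_add_right _ _), Nat.add_sub_cancel_left,
    Nat.mul_div_cancel_left _ n.succ_pos]

theorem uvwNormalForm_add_mul_right (b i : ℕ) :
    uvwNormalForm k n i (i + (n + 1) * b) = Ideal.Quotient.mk _ (X 1 ^ b * X 2 ^ i) := by
  rcases b.eq_zero_or_pos with rfl | hb
  · simp [uvwNormalForm]
  · have : 0 < (n + 1) * b := by positivity
    rw [uvwNormalForm, if_neg (by omega), Nat.add_sub_cancel_left,
      Nat.mul_div_cancel_left _ n.succ_pos]

theorem smul_mk_uvwIdeal (c : k) (p : MvPolynomial (Fin 3) k) :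
    c • (Ideal.Quotient.mk (uvwIdeal k n) p) = Ideal.Quotient.mk _ (C c * p) := by
  rw [← smul_eq_C_mul, ← Ideal.Quotient.mkₐ_eq_mk k, map_smul]

theorem X_mul_X_pow_mul_X_pow_sub_X_pow_mem_uvwIdeal (b c : ℕ) :
    (X 0 * X 1) ^ b * X 2 ^ c - X 2 ^ ((n + 1) * b + c) ∈ uvwIdeal k n := by
  have h := (sub_dvd_pow_sub_pow (X 0 * X 1 : MvPolynomial (Fin 3) k) (X 2 ^ (n + 1)) b).mul_right
    (X 2 ^ c)
  rw [sub_mul, ← pow_mul, ← pow_add] at h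
  exact Ideal.mem_span_singleton.mpr h

theorem toUVWQuotient_uvwHom_monomial (e : Fin 3 →₀ ℕ) (c : k) :
    toUVWQuotient k n (uvwHom k n (monomial e c)) = Ideal.Quotient.mk _ (monomial e c) := by
  rw [uvwHom_monomial, toUVWQuotient_C_mul_X_pow_mul_X_pow, monomial_eq, Finsupp.prod_pow,
    Fin.prod_univ_three]
  rcases le_total (e 1) (e 0) with h | h
  · obtain ⟨a, ha⟩ := Nat.exists_eq_add_of_le h
    rw [show (n + 1) * e 0 + e 2 = (n + 1) * e 1 + e 2 + (n + 1) * a by rw [ha]; ring,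
      uvwNormalForm_add_mul_left, smul_mk_uvwIdeal]
    refine (Ideal.Quotient.eq.mpr ?_).symm
    convert (uvwIdeal k n).mul_mem_left (C c * X 0 ^ a)
      (X_mul_X_pow_mul_X_pow_sub_X_pow_mem_uvwIdeal (e 1) (e 2)) using 1
    rw [ha]; ring
  · obtain ⟨b, hb⟩ := Nat.exists_eq_add_of_le h
    rw [show (n + 1) * e 1 + e 2 = (n + 1) * e 0 + e 2 + (n + 1) * b by rw [hb]; ring,
      uvwNormalForm_add_mul_right, smul_mk_uvwIdeal]
    refine (Ideal.Quotient.eq.mpr ?_).symm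
    convert (uvwIdeal k n).mul_mem_left (C c * X 1 ^ b)
      (X_mul_X_pow_mul_X_pow_sub_X_pow_mem_uvwIdeal (e 0) (e 2)) using 1
    rw [hb]; ring

theorem toUVWQuotient_uvwHom (q : MvPolynomial (Fin 3) k) :
    toUVWQuotient k n (uvwHom k n q) = Ideal.Quotient.mk _ q := by
  induction q using MvPolynomial.induction_on' with
  | monomial e c => exact toUVWQuotient_uvwHom_monomial e c
  | add p q hp hq => rw [map_add, map_add, hp, hq, map_add]

theorem ker_uvwHom : RingHom.ker (uvwHom k n) = uvwIdeal k n := by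
  refine le_antisymm (fun q hq => ?_) ?_
  · rw [← Ideal.Quotient.eq_zero_iff_mem, ← toUVWQuotient_uvwHom, RingHom.mem_ker.mp hq,
      map_zero]
  · rw [uvwIdeal, Ideal.span_le, Set.singleton_subset_iff, SetLike.mem_coe, RingHom.mem_ker]
    simp [uvwHom, mul_pow]

theorem range_uvwHom :
    (uvwHom k n).range =
      Algebra.adjoin k {(X 0 ^ (n + 1) : MvPolynomial (Fin 2) k), X 1 ^ (n + 1), X 0 * X 1} := by
  rw [uvwHom, ← Algebra.adjoin_range_eq_range_aeval, Matrix.range_cons, Matrix.range_cons,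
    Matrix.range_cons_empty, Set.singleton_union, Set.singleton_union]

variable (k n) in
def uvwQuotientEquivRange : UVWQuotient k n ≃ₐ[k] (uvwHom k n).range :=
  (Ideal.quotientEquivAlgOfEq k ker_uvwHom.symm).trans (Ideal.quotientKerEquivRange _)

theorem uvwQuotientEquivRange_mk (q : MvPolynomial (Fin 3) k) :
    (uvwQuotientEquivRange k n (Ideal.Quotient.mk _ q) : MvPolynomial (Fin 2) k) =
      uvwHom k n q :=
  rfl

end Presentation

end

theorem stmt9 (k : Type*) [Field k] (n : ℕ) (ζ : k) (hζ : IsPrimitiveRoot ζ (n + 1)) :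
    let R := MvPolynomial (Fin 2) k
    let g : R →ₐ[k] R :=
      aeval (fun i : Fin 2 => if i = 0 then C ζ * X 0 else C (ζ ^ n) * X 1)
    let S : Subalgebra k R := AlgHom.equalizer g (AlgHom.id k R)
    S = Algebra.adjoin k {(X 0 ^ (n + 1) : R), X 1 ^ (n + 1), X 0 * X 1} ∧
      ∃ φ : (MvPolynomial (Fin 3) k ⧸
              Ideal.span {(X 0 * X 1 - X 2 ^ (n + 1) : MvPolynomial (Fin 3) k)}) ≃ₐ[k] S,
        ((φ (Ideal.Quotient.mk _ (X 0)) : R) = X 0 ^ (n + 1)) ∧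
        ((φ (Ideal.Quotient.mk _ (X 1)) : R) = X 1 ^ (n + 1)) ∧
        ((φ (Ideal.Quotient.mk _ (X 2)) : R) = X 0 * X 1) := by
  intro R g S
  have hS : S = Algebra.adjoin k {(X 0 ^ (n + 1) : R), X 1 ^ (n + 1), X 0 * X 1} :=
    equalizer_diagAction_eq_adjoin hζ
  refine ⟨hS,
    (uvwQuotientEquivRange k n).trans (Subalgebra.equivOfEq _ _ (range_uvwHom.trans hS.symm)),
    ?_, ?_, ?_⟩ <;> exact (uvwQuotientEquivRange_mk _).trans (by simp [uvwHom])
end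

section
/- Let K be a free abelian group of finite rank with a class δ ∈ K and suppose R ⊂ K (the set of 'roots') has the property that R maps to a finite set under the projection K → K/ℤδ. Let Z : K → ℂ be a homomorphism with Z(δ) ≠ 0 and let S ⊂ R be any subset ('classes of stable objects') with Z(α) ≠ 0 for α ∈ S. Then for every homomorphism U : K → ℂ, the quantity sup_{α ∈ S} |U(α)|/|Z(α)| is finite. -/
/-!
On a coset `α₀ + ℤδ` the ratio `‖U α‖ / ‖Z α‖` is `k ↦ ‖(U α₀ + k U δ) / (Z α₀ + k Z δ)‖`, a
Möbius transformation of `k` which tends to `‖U δ / Z δ‖` as `|k| → ∞` because `Z δ ≠ 0`; hence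
it is bounded on every coset, and `R` meets only finitely many cosets.
-/

open Filter Topology Bornology Set

theorem tendsto_intCast_cofinite_cobounded :
    Tendsto ((↑) : ℤ → ℂ) cofinite (cobounded ℂ) := by
  have h := (RCLike.tendsto_ofReal_cobounded_cobounded (𝕜 := ℂ)).comp
    (Metric.cobounded_eq_cocompact (α := ℝ) ▸ Int.tendsto_coe_cofinite)
  convert h using 1
  ext k
  simp

theorem tendsto_div_affine_cobounded {a b c d : ℂ} (hd : d ≠ 0) :
    Tendsto (fun z => (a + z * b) / (c + z * d)) (cobounded ℂ) (𝓝 (b / d)) := by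
  have hcont : ContinuousAt (fun w => (a * w + b) / (c * w + d)) 0 :=
    ((continuous_const.mul continuous_id).add continuous_const).continuousAt.div
      ((continuous_const.mul continuous_id).add continuous_const).continuousAt (by simpa)
  have h := hcont.tendsto.comp tendsto_inv₀_cobounded
  simp only [mul_zero, zero_add] at h
  refine h.congr' ?_
  filter_upwards [isBounded_def.mp (isBounded_singleton (x := (0 : ℂ)))] with z hz
  have hz : z ≠ 0 := hz
  simp only [Function.comp_apply]
  rw [← mul_div_mul_left _ _ hz]
  congr 1 <;> field_simp

theorem bddAbove_range_norm_div_affine {a b c d : ℂ} (hd : d ≠ 0) :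
    BddAbove (range fun k : ℤ => ‖(a + k * b) / (c + k * d)‖) :=
  ((tendsto_div_affine_cobounded hd).comp tendsto_intCast_cofinite_cobounded).norm
    |>.bddAbove_range_of_cofinite

theorem AddMonoidHom.bddAbove_norm_div_image_coset {K : Type*} [AddCommGroup K]
    (U Z : K →+ ℂ) {δ : K} (hZδ : Z δ ≠ 0) (q : K ⧸ AddSubgroup.zmultiples δ) :
    BddAbove ((fun α => ‖U α‖ / ‖Z α‖) '' (QuotientAddGroup.mk ⁻¹' {q})) := by
  obtain ⟨r, rfl⟩ := QuotientAddGroup.mk_surjective q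
  refine (bddAbove_range_norm_div_affine (a := U r) (b := U δ) (c := Z r) hZδ).mono ?_
  rintro _ ⟨α, hα, rfl⟩
  obtain ⟨k, hk⟩ := AddSubgroup.mem_zmultiples_iff.mp (QuotientAddGroup.eq.mp (Eq.symm hα))
  have hα : α = r + k • δ := by rw [hk, add_neg_cancel_left]
  exact ⟨k, by simp [hα, zsmul_eq_mul]⟩

theorem stmt18_general {K : Type*} [AddCommGroup K]
    (δ : K) (R S : Set K) (hSR : S ⊆ R)
    (hfin : (((QuotientAddGroup.mk' (AddSubgroup.zmultiples δ))) '' R).Finite)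
    (Z : K →+ ℂ) (hZδ : Z δ ≠ 0) :
    ∀ U : K →+ ℂ, ∃ M : ℝ, ∀ α ∈ S, ‖U α‖ / ‖Z α‖ ≤ M := by
  intro U
  set π := QuotientAddGroup.mk' (AddSubgroup.zmultiples δ)
  have hS : S ⊆ ⋃ q ∈ π '' R, π ⁻¹' {q} := fun α hα =>
    mem_biUnion (mem_image_of_mem π (hSR hα)) rfl
  have hbdd : BddAbove ((fun α => ‖U α‖ / ‖Z α‖) '' ⋃ q ∈ π '' R, π ⁻¹' {q}) := by
    rw [image_iUnion₂, hfin.bddAbove_biUnion]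
    exact fun q _ => U.bddAbove_norm_div_image_coset Z hZδ q
  obtain ⟨M, hM⟩ := hbdd.mono (image_mono hS)
  exact ⟨M, fun α hα => hM (mem_image_of_mem _ hα)⟩

theorem stmt18 {K : Type*} [AddCommGroup K] [Module.Free ℤ K] [Module.Finite ℤ K]
    (δ : K) (R S : Set K) (hSR : S ⊆ R)
    (hfin : (((QuotientAddGroup.mk' (AddSubgroup.zmultiples δ))) '' R).Finite)
    (Z : K →+ ℂ) (hZδ : Z δ ≠ 0) (hZS : ∀ α ∈ S, Z α ≠ 0) :
    ∀ U : K →+ ℂ, ∃ M : ℝ, ∀ α ∈ S, ‖U α‖ / ‖Z α‖ ≤ M :=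
  stmt18_general δ R S hSR hfin Z hZδ
end
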